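/- Let G be a loopless directed graph without multiple arcs on vertex set [n], let π be any permutation of [n], and let v be any vertex. If exactly j in-neighbors of v appear before v in π, then the winner y_n of the permutation mechanism applied to G and π has in-degree at least j. -/

import Mathlib

/- Directed graphs on vertex set `[n]` (modelled as `Fin (n+1)`, so the vertex set is
nonempty) are given by a Boolean arc relation `A`; looplessness is `∀ v, A v v = false`,
and absence of multiple arcs is automatic. -/

/-- The number of in-neighbors of `v` (w.r.t. the arc relation `A`) lying in the set `S`. -/
def inNbrs {m : ℕ} (A : Fin m → Fin m → Bool) (S : Finset (Fin m)) (v : Fin m) : ℕ :=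
  (S.filter fun u => A u v).card

/-- The in-degree `d⁻(v)` of a vertex `v`. -/
def inDeg {m : ℕ} (A : Fin m → Fin m → Bool) (v : Fin m) : ℕ :=
  inNbrs A Finset.univ v

/-- The maximum in-degree `Δ⁻(G)`. -/
def maxInDeg {m : ℕ} (A : Fin m → Fin m → Bool) : ℕ :=
  Finset.univ.sup (inDeg A)

/-- `Π_k`: the set of the first `k` vertices in the permutation `π`. -/
def firstK {m : ℕ} (π : Equiv.Perm (Fin m)) (k : ℕ) : Finset (Fin m) :=
  Finset.univ.filter fun v => (π.symm v : ℕ) < k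

/-- The provisional leader of the permutation mechanism after the vertices in
positions `0, 1, …, i` (0-indexed) have been examined.  `leader A π 0 = π 0` is `y₁`,
and the new vertex becomes leader when it has at least as many in-neighbors in
`Π_{i+1} ∖ {y}` as the current leader `y`. -/
def leader {n : ℕ} (A : Fin (n+1) → Fin (n+1) → Bool) (π : Equiv.Perm (Fin (n+1))) :
    ℕ → Fin (n+1)
  | 0 => π 0
  | i + 1 =>
      let y := leader A π i
      if h : i + 1 < n + 1 then
        let c := π ⟨i + 1, h⟩
        let S := (firstK π (i + 1)).erase y
        if inNbrs A S y ≤ inNbrs A S c then c else y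
      else y

/-- The winner `y_n` of the permutation mechanism. -/
def winner {n : ℕ} (A : Fin (n+1) → Fin (n+1) → Bool) (π : Equiv.Perm (Fin (n+1))) :
    Fin (n+1) :=
  leader A π n

/-!
The leader's score — its number of in-neighbours among the examined vertices other than
itself — never decreases, and it bounds the winner's in-degree at the end. When `v` is examined,
the score jumps to at least `j`: either `v` becomes leader and keeps all `j` earlier
in-neighbours, or the old leader beats `v` strictly on a set missing at most one of them.
-/

lemma inNbrs_mono {m : ℕ} (A : Fin m → Fin m → Bool) {S T : Finset (Fin m)} (h : S ⊆ T)
    (v : Fin m) : inNbrs A S v ≤ inNbrs A T v :=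
  Finset.card_le_card (Finset.filter_subset_filter _ h)

lemma inNbrs_le_inDeg {m : ℕ} (A : Fin m → Fin m → Bool) (S : Finset (Fin m)) (v : Fin m) :
    inNbrs A S v ≤ inDeg A v :=
  inNbrs_mono A (Finset.subset_univ S) v

lemma inNbrs_le_inNbrs_erase_add_one {m : ℕ} (A : Fin m → Fin m → Bool) (S : Finset (Fin m))
    (y v : Fin m) : inNbrs A S v ≤ inNbrs A (S.erase y) v + 1 := by
  have := Finset.pred_card_le_card_erase (s := S.filter fun u => A u v) (a := y)
  rw [inNbrs, inNbrs, Finset.filter_erase]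
  omega

section firstK

variable {m : ℕ} (π : Equiv.Perm (Fin m))

@[simp]
lemma mem_firstK {k : ℕ} {x : Fin m} : x ∈ firstK π k ↔ (π.symm x : ℕ) < k := by
  simp [firstK]

@[simp]
lemma firstK_zero : firstK π 0 = ∅ := by
  ext x
  simp

lemma firstK_mono : Monotone (firstK π) := fun _ _ hkl _ hx => by
  rw [mem_firstK] at hx ⊢
  omega

lemma firstK_subset_erase_succ {k : ℕ} {c : Fin m} (hc : (π.symm c : ℕ) = k) :
    firstK π k ⊆ (firstK π (k + 1)).erase c := fun x hx => by
  rw [mem_firstK] at hx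
  rw [Finset.mem_erase, mem_firstK]
  exact ⟨by rintro rfl; omega, by omega⟩

end firstK

section leader

variable {n : ℕ} (A : Fin (n+1) → Fin (n+1) → Bool) (π : Equiv.Perm (Fin (n+1)))

lemma leader_succ_of_lt {i : ℕ} (h : i + 1 < n + 1) :
    leader A π (i + 1) =
      if inNbrs A ((firstK π (i + 1)).erase (leader A π i)) (leader A π i)
          ≤ inNbrs A ((firstK π (i + 1)).erase (leader A π i)) (π ⟨i + 1, h⟩)
      then π ⟨i + 1, h⟩ else leader A π i := by
  rw [leader, dif_pos h]

lemma leader_succ_of_le {i : ℕ} (h : n ≤ i) : leader A π (i + 1) = leader A π i := by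
  rw [leader, dif_neg (by omega)]

def leaderScore (i : ℕ) : ℕ :=
  inNbrs A ((firstK π (i + 1)).erase (leader A π i)) (leader A π i)

lemma leaderScore_monotone : Monotone (leaderScore A π) := by
  refine monotone_nat_of_le_succ fun i => ?_
  have hprefix :
      (firstK π (i + 1)).erase (leader A π i) ⊆ (firstK π (i + 2)).erase (leader A π i) :=
    Finset.erase_subset_erase _ (firstK_mono π (by omega))
  unfold leaderScore
  by_cases h : i + 1 < n + 1
  · rw [leader_succ_of_lt A π h]
    split_ifs with hwin
    · refine hwin.trans (inNbrs_mono A (fun x hx => ?_) _)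
      exact firstK_subset_erase_succ π (by simp) (Finset.mem_of_mem_erase hx)
    · exact inNbrs_mono A hprefix _
  · rw [leader_succ_of_le A π (by omega)]
    exact inNbrs_mono A hprefix _

lemma inNbrs_firstK_le_leaderScore (k : Fin (n+1)) :
    inNbrs A (firstK π k) (π k) ≤ leaderScore A π k := by
  rcases k with ⟨_ | i, hk⟩
  · simp [inNbrs]
  show inNbrs A (firstK π (i + 1)) (π ⟨i + 1, hk⟩) ≤ leaderScore A π (i + 1)
  unfold leaderScore
  rw [leader_succ_of_lt A π hk]
  set y := leader A π i
  set c := π ⟨i + 1, hk⟩ with hc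
  set S := (firstK π (i + 1)).erase y
  split_ifs with hwin
  · exact inNbrs_mono A (firstK_subset_erase_succ π (by simp [hc])) c
  · calc inNbrs A (firstK π (i + 1)) c
        ≤ inNbrs A S c + 1 := inNbrs_le_inNbrs_erase_add_one A _ y c
      _ ≤ inNbrs A S y := by omega
      _ ≤ inNbrs A ((firstK π (i + 2)).erase y) y :=
        inNbrs_mono A (Finset.erase_subset_erase _ (firstK_mono π (by omega))) y

end leader

theorem permutation_mechanism_winner_deg_ge_general (n : ℕ) (A : Fin (n+1) → Fin (n+1) → Bool)
    (π : Equiv.Perm (Fin (n+1))) (v : Fin (n+1)) (j : ℕ)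
    (hj : inNbrs A (Finset.univ.filter fun u => (π.symm u : ℕ) < (π.symm v : ℕ)) v = j) :
    j ≤ inDeg A (winner A π) := by
  have hv : π (π.symm v) = v := π.apply_symm_apply v
  calc j = inNbrs A (firstK π (π.symm v)) (π (π.symm v)) := by rw [hv]; exact hj.symm
    _ ≤ leaderScore A π (π.symm v) := inNbrs_firstK_le_leaderScore A π _
    _ ≤ leaderScore A π n := leaderScore_monotone A π (Nat.lt_succ_iff.mp (π.symm v).isLt)
    _ ≤ inDeg A (winner A π) := inNbrs_le_inDeg A _ _

/-- If exactly `j` in-neighbors of `v` appear before `v` in the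
permutation `π`, then the winner of the permutation mechanism applied to `G` and `π`
has in-degree at least `j`. -/
theorem permutation_mechanism_winner_deg_ge (n : ℕ) (A : Fin (n+1) → Fin (n+1) → Bool)
    (hloopless : ∀ v, A v v = false) (π : Equiv.Perm (Fin (n+1))) (v : Fin (n+1)) (j : ℕ)
    (hj : inNbrs A (Finset.univ.filter fun u => (π.symm u : ℕ) < (π.symm v : ℕ)) v = j) :
    j ≤ inDeg A (winner A π) :=
  permutation_mechanism_winner_deg_ge_general n A π v j hj
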